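/- Let c ∈ ℂ with c ≠ 4i and c ≠ −4i, let D, E, δ, ε be the associated Loewner parameters for the driving function c√(τ+t) with τ = 0, and let s > 0. Suppose g : ℝ → ℂ is continuous at 0 and at s with g(0) = z and g(s) = c·√s, for every t ∈ (0,s) the point g(t) satisfies g(t) ≠ c·√t and g has derivative 2/(g(t) − c·√t) at t, and for every t ∈ [0,s] both g(t) − D·√t and g(t) − E·√t lie outside the slit (−∞, 0] (at t = s this says E·√s ∉ (−∞,0] and D·√s ∉ (−∞,0]). Then z = (E·√s)^δ · (D·√s)^ε, where z^w denotes the principal complex power exp(w·Log z). (In particular, every point captured by the driving function c√t at time s lies on the set {(E√s)^δ(D√s)^ε}, so the hull grows along rays from the origin.) -/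

import Mathlib

/-!
Along the Loewner flow `ġ = 2 / (g - c√t)` the quantity
`φ(t) = (g(t) - D√t)^δ · (g(t) - E√t)^ε` is conserved: since `D + E = c`, its logarithmic
derivative is a combination of `δ + ε`, `δD + εE` and `δD² + εE²`, which equal `1`, `0` and `4`
and make it vanish. At `t = 0` the conserved quantity is `z^(δ+ε) = z`; at the capture time `s`,
where `g(s) = c√s = (D + E)√s`, it is `(E√s)^δ (D√s)^ε`.
-/

open Complex Set

lemma sq_add_sixteen_ne_zero {c : ℂ} (hc : c ≠ 4 * I) (hc' : c ≠ -4 * I) : c ^ 2 + 16 ≠ 0 := by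
  have hfactor : c ^ 2 + 16 = (c - 4 * I) * (c - -4 * I) := by
    linear_combination (16 : ℂ) * I_sq
  rw [hfactor]
  exact mul_ne_zero (sub_ne_zero.mpr hc) (sub_ne_zero.mpr hc')

lemma loewner_params_relations {c q D E δ ε : ℂ} (hq : q ^ 2 = c ^ 2 + 16) (hq0 : q ≠ 0)
    (hD : D = (c + q) / 2) (hE : E = (c - q) / 2)
    (hδ : δ = (1 - c / q) / 2) (hε : ε = (1 + c / q) / 2) :
    D + E = c ∧ δ + ε = 1 ∧ δ * D + ε * E = 0 ∧ δ * D ^ 2 + ε * E ^ 2 = 4 := by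
  subst hD hE hδ hε
  refine ⟨by ring, by ring, by field_simp; ring, ?_⟩
  field_simp
  linear_combination 2 * q * hq

lemma loewner_flow_identity {D E δ ε w a : ℂ} (hw : w ≠ 0) (ha : a ≠ 0)
    (h0 : δ + ε = 1) (h1 : δ * D + ε * E = 0) (h2 : δ * D ^ 2 + ε * E ^ 2 = 4) :
    δ * (2 / w - D / (2 * a)) * (w + D * a) + ε * (2 / w - E / (2 * a)) * (w + E * a) = 0 := by
  field_simp
  linear_combination (4 * a * w) * h0 + (4 * a ^ 2 - w ^ 2) * h1 - (a * w) * h2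

lemma HasDerivAt.cpow_mul_cpow_eq_zero {u v : ℝ → ℂ} {u' v' δ ε : ℂ} {t : ℝ}
    (hu : HasDerivAt u u' t) (hv : HasDerivAt v v' t)
    (hut : u t ∈ slitPlane) (hvt : v t ∈ slitPlane) (hlog : δ * u' * v t + ε * v' * u t = 0) :
    HasDerivAt (fun x => u x ^ δ * v x ^ ε) 0 t := by
  refine (((hasStrictDerivAt_cpow_const hut).hasDerivAt.comp t hu).mul
    ((hasStrictDerivAt_cpow_const hvt).hasDerivAt.comp t hv)).congr_deriv ?_
  have hu0 := slitPlane_ne_zero hut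
  have hv0 := slitPlane_ne_zero hvt
  simp only [Function.comp_apply]
  rw [cpow_sub _ _ hu0, cpow_sub _ _ hv0, cpow_one, cpow_one]
  field_simp
  linear_combination (u t ^ δ * v t ^ ε) * hlog

lemma continuousOn_Icc_of_continuousAt {X : Type*} [TopologicalSpace X] {f : ℝ → X} {a b : ℝ}
    (ha : ContinuousAt f a) (hb : ContinuousAt f b) (h : ∀ x ∈ Ioo a b, ContinuousAt f x) :
    ContinuousOn f (Icc a b) := by
  intro x hx
  rcases hx.1.eq_or_lt with rfl | hax
  · exact ha.continuousWithinAt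
  rcases hx.2.eq_or_lt with rfl | hxb
  · exact hb.continuousWithinAt
  exact (h x ⟨hax, hxb⟩).continuousWithinAt

section LoewnerFlow

variable {c D E δ ε : ℂ} {g : ℝ → ℂ}

noncomputable def loewnerInvariant (D E δ ε : ℂ) (g : ℝ → ℂ) (t : ℝ) : ℂ :=
  (g t - D * (Real.sqrt t : ℂ)) ^ δ * (g t - E * (Real.sqrt t : ℂ)) ^ ε

lemma continuousOn_loewnerInvariant {s : ℝ} (hg : ContinuousOn g (Icc 0 s))
    (hslit : ∀ t ∈ Icc (0 : ℝ) s,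
      (g t - D * (Real.sqrt t : ℂ)) ∈ slitPlane ∧ (g t - E * (Real.sqrt t : ℂ)) ∈ slitPlane) :
    ContinuousOn (loewnerInvariant D E δ ε g) (Icc 0 s) := by
  have hsqrt : Continuous fun t : ℝ => (Real.sqrt t : ℂ) := by fun_prop
  intro t ht
  exact (((hg t ht).sub (hsqrt.continuousWithinAt.const_mul D)).cpow continuousWithinAt_const
    (hslit t ht).1).mul
    (((hg t ht).sub (hsqrt.continuousWithinAt.const_mul E)).cpow continuousWithinAt_const
    (hslit t ht).2)

lemma hasDerivAt_loewnerInvariant_zero {t : ℝ} (ht : 0 < t) (hDE : D + E = c)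
    (h0 : δ + ε = 1) (h1 : δ * D + ε * E = 0) (h2 : δ * D ^ 2 + ε * E ^ 2 = 4)
    (hne : g t ≠ c * (Real.sqrt t : ℂ))
    (hg : HasDerivAt g (2 / (g t - c * (Real.sqrt t : ℂ))) t)
    (hDt : g t - D * (Real.sqrt t : ℂ) ∈ slitPlane)
    (hEt : g t - E * (Real.sqrt t : ℂ) ∈ slitPlane) :
    HasDerivAt (loewnerInvariant D E δ ε g) 0 t := by
  set a : ℂ := (Real.sqrt t : ℂ)
  have ha : a ≠ 0 := ofReal_ne_zero.mpr (Real.sqrt_pos.mpr ht).ne'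
  have hsqrt : HasDerivAt (fun x : ℝ => (Real.sqrt x : ℂ)) (1 / (2 * a)) t := by
    simpa [a] using (Real.hasDerivAt_sqrt ht.ne').ofReal_comp
  refine HasDerivAt.cpow_mul_cpow_eq_zero (hg.sub (hsqrt.const_mul D)) (hg.sub (hsqrt.const_mul E))
    hDt hEt ?_
  have hgD : g t - D * a = g t - c * a + E * a := by rw [← hDE]; ring
  have hgE : g t - E * a = g t - c * a + D * a := by rw [← hDE]; ring
  rw [hgD, hgE, mul_one_div, mul_one_div]
  exact loewner_flow_identity (sub_ne_zero.mpr hne) ha h0 h1 h2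

lemma loewnerInvariant_at_zero (h0 : δ + ε = 1) (hg0 : g 0 ≠ 0) :
    loewnerInvariant D E δ ε g 0 = g 0 := by
  simp only [loewnerInvariant, Real.sqrt_zero, ofReal_zero, mul_zero, sub_zero]
  rw [← cpow_add _ _ hg0, h0, cpow_one]

lemma loewnerInvariant_at_capture {s : ℝ} (hDE : D + E = c) (hgs : g s = c * (Real.sqrt s : ℂ)) :
    loewnerInvariant D E δ ε g s = (E * (Real.sqrt s : ℂ)) ^ δ * (D * (Real.sqrt s : ℂ)) ^ ε := by
  simp only [loewnerInvariant, hgs, ← hDE]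
  ring_nf

end LoewnerFlow

theorem loewner_tips_sqrt_t
    (c D E δ ε : ℂ) (hc4 : c ≠ 4 * Complex.I) (hc4' : c ≠ -4 * Complex.I)
    (hD : D = (c + (c ^ 2 + 16) ^ ((1 : ℂ) / 2)) / 2)
    (hE : E = (c - (c ^ 2 + 16) ^ ((1 : ℂ) / 2)) / 2)
    (hδ : δ = (1 - c / (c ^ 2 + 16) ^ ((1 : ℂ) / 2)) / 2)
    (hε : ε = (1 + c / (c ^ 2 + 16) ^ ((1 : ℂ) / 2)) / 2)
    (s : ℝ) (hs : 0 < s)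
    (g : ℝ → ℂ) (z : ℂ)
    (hcont0 : ContinuousAt g 0) (hconts : ContinuousAt g s)
    (hg0 : g 0 = z) (hgs : g s = c * (Real.sqrt s : ℂ))
    (h : ∀ t ∈ Set.Ioo (0 : ℝ) s,
      g t ≠ c * (Real.sqrt t : ℂ) ∧
      HasDerivAt g (2 / (g t - c * (Real.sqrt t : ℂ))) t)
    (hslit : ∀ t ∈ Set.Icc (0 : ℝ) s,
      (g t - D * (Real.sqrt t : ℂ)) ∈ Complex.slitPlane ∧
      (g t - E * (Real.sqrt t : ℂ)) ∈ Complex.slitPlane) :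
    z = (E * (Real.sqrt s : ℂ)) ^ δ * (D * (Real.sqrt s : ℂ)) ^ ε := by
  have hc := sq_add_sixteen_ne_zero hc4 hc4'
  obtain ⟨hDE, h0, h1, h2⟩ := loewner_params_relations
    (by rw [one_div, cpow_ofNat_inv_pow]) (by simp [cpow_eq_zero_iff, hc]) hD hE hδ hε
  have hg0ne : g 0 ≠ 0 := slitPlane_ne_zero (by simpa using (hslit 0 ⟨le_rfl, hs.le⟩).1)
  have hcont : ContinuousOn (loewnerInvariant D E δ ε g) (Icc 0 s) :=
    continuousOn_loewnerInvariant
      (continuousOn_Icc_of_continuousAt hcont0 hconts fun t ht => (h t ht).2.continuousAt) hslit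
  have hderiv : ∀ t ∈ Ioo 0 s, HasDerivAt (loewnerInvariant D E δ ε g) 0 t := fun t ht =>
    hasDerivAt_loewnerInvariant_zero ht.1 hDE h0 h1 h2 (h t ht).1 (h t ht).2
      (hslit t (Ioo_subset_Icc_self ht)).1 (hslit t (Ioo_subset_Icc_self ht)).2
  have hftc := intervalIntegral.integral_eq_sub_of_hasDerivAt_of_le hs.le hcont hderiv
    intervalIntegrable_const
  rw [intervalIntegral.integral_zero, eq_comm, sub_eq_zero,
    loewnerInvariant_at_capture hDE hgs, loewnerInvariant_at_zero h0 hg0ne, hg0] at hftc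
  exact hftc.symm
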